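/- An element x = [x_ε] of ρ-ℝ̃ is invertible if and only if there exist a representative (x_ε) of x and m ∈ ℕ such that |x_ε| > ρ_ε^m for all ε small. -/

import Mathlib

open Filter Topology Set Asymptotics

/-- `x` is a ρ-moderate net: `x_ε = O(ρ_ε^{-a})` as `ε → 0⁺` for some `a > 0`. -/
def RMod (ρ x : ℝ → ℝ) : Prop :=
  ∃ a : ℝ, 0 < a ∧ x =O[𝓝[>] (0:ℝ)] fun ε => ρ ε ^ (-a)

/-- `x` is a ρ-negligible net: `x_ε = O(ρ_ε^{a})` as `ε → 0⁺` for every `a > 0`. -/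
def RNegl (ρ x : ℝ → ℝ) : Prop :=
  ∀ a : ℝ, 0 < a → x =O[𝓝[>] (0:ℝ)] fun ε => ρ ε ^ a

/-- The order relation of `ρ-ℝ̃` at the level of representatives:
`x ≤ y` iff `x_ε ≤ y_ε + z_ε` for `ε` small, for some ρ-negligible net `z`. -/
def RLe (ρ x y : ℝ → ℝ) : Prop :=
  ∃ z : ℝ → ℝ, RNegl ρ z ∧ ∀ᶠ ε in 𝓝[>] (0:ℝ), x ε ≤ y ε + z ε

/-- Invertibility in `ρ-ℝ̃` at the level of representatives. -/
def RInv (ρ x : ℝ → ℝ) : Prop :=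
  ∃ y : ℝ → ℝ, RMod ρ y ∧ RNegl ρ (x * y - 1)

/-- Strict order `x < y` of `ρ-ℝ̃`: some nonnegative invertible `r` satisfies `r ≤ y - x`. -/
def RLt (ρ x y : ℝ → ℝ) : Prop :=
  ∃ r : ℝ → ℝ, RMod ρ r ∧ RInv ρ r ∧ RLe ρ 0 r ∧ RLe ρ r (y - x)

/-! If `x y ≈ 1` with `|y| ≤ C ρ^{-b}`, then `|x| ≳ ρ^b`, which beats `ρ^m` for any integer
`m > b`. Conversely, a representative with `|x'| > ρ^m` has the moderate inverse `1/x'`, and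
`x/x' - 1 = (x - x')/x'` is negligible times moderate, hence negligible. -/

section Asymptotics

variable {α : Type*} {l : Filter α} {ρ : α → ℝ}

lemma rpow_isBigO_rpow_of_le (hρ : ∀ᶠ ε in l, 0 < ρ ε) (hρ0 : Tendsto ρ l (𝓝 0))
    {a b : ℝ} (hab : a ≤ b) : (fun ε => ρ ε ^ b) =O[l] fun ε => ρ ε ^ a := by
  refine IsBigO.of_bound 1 ?_
  filter_upwards [hρ, hρ0.eventually (eventually_le_nhds one_pos)] with ε hpos hle
  simp only [Real.norm_eq_abs, abs_of_pos (Real.rpow_pos_of_pos hpos _), one_mul]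
  exact Real.rpow_le_rpow_of_exponent_ge hpos hle hab

lemma pow_isLittleO_rpow (hρ : ∀ᶠ ε in l, 0 < ρ ε) (hρ0 : Tendsto ρ l (𝓝 0))
    {b : ℝ} {m : ℕ} (hbm : b < m) : (fun ε => ρ ε ^ m) =o[l] fun ε => ρ ε ^ b := by
  have hsmall : (fun ε => ρ ε ^ ((m : ℝ) - b)) =o[l] fun _ => (1 : ℝ) := by
    rw [isLittleO_one_iff]
    simpa [Real.zero_rpow (sub_pos.2 hbm).ne'] using hρ0.rpow_const (Or.inr (sub_pos.2 hbm).le)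
  refine (hsmall.mul_isBigO (isBigO_refl (fun ε => ρ ε ^ b) l)).congr' ?_ (by simp)
  filter_upwards [hρ] with ε hpos
  rw [← Real.rpow_add hpos, sub_add_cancel, Real.rpow_natCast]

lemma exists_pow_lt_abs_of_rpow_isBigO (hρ : ∀ᶠ ε in l, 0 < ρ ε) (hρ0 : Tendsto ρ l (𝓝 0))
    {x : α → ℝ} {b : ℝ} (hx : (fun ε => ρ ε ^ b) =O[l] x) :
    ∃ m : ℕ, ∀ᶠ ε in l, ρ ε ^ m < |x ε| := by
  refine ⟨⌈b⌉₊ + 1, ?_⟩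
  have hbm : b < ((⌈b⌉₊ + 1 : ℕ) : ℝ) := by push_cast; linarith [Nat.le_ceil b]
  have hlo := (pow_isLittleO_rpow hρ hρ0 hbm).trans_isBigO hx
  filter_upwards [hlo.bound one_half_pos, hρ] with ε hbound hpos
  rw [Real.norm_eq_abs, Real.norm_eq_abs, abs_of_pos (pow_pos hpos _)] at hbound
  linarith [pow_pos hpos (⌈b⌉₊ + 1)]

end Asymptotics

lemma eventually_pos_nhdsGT_of_pos_on_Ioc {ρ : ℝ → ℝ} (hρpos : ∀ ε ∈ Ioc (0:ℝ) 1, 0 < ρ ε) :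
    ∀ᶠ ε in 𝓝[>] (0:ℝ), 0 < ρ ε :=
  eventually_of_mem (Ioc_mem_nhdsGT one_pos) hρpos

section Nets

variable {ρ : ℝ → ℝ}

lemma rNegl_zero (ρ : ℝ → ℝ) : RNegl ρ 0 := fun _ _ => isBigO_zero _ _

lemma RNegl.tendsto_zero (hρ0 : Tendsto ρ (𝓝[>] 0) (𝓝 0)) {z : ℝ → ℝ} (hz : RNegl ρ z) :
    Tendsto z (𝓝[>] 0) (𝓝 0) :=
  (hz 1 one_pos).trans_tendsto (by simpa using hρ0)

lemma RNegl.mul_rMod (hρ : ∀ᶠ ε in 𝓝[>] (0:ℝ), 0 < ρ ε) {z w : ℝ → ℝ} (hz : RNegl ρ z)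
    (hw : RMod ρ w) : RNegl ρ (z * w) := by
  obtain ⟨b, hb, hwb⟩ := hw
  intro a ha
  refine ((hz (a + b) (by positivity)).mul hwb).congr' EventuallyEq.rfl ?_
  filter_upwards [hρ] with ε hpos
  rw [← Real.rpow_add hpos, add_neg_cancel_right]

lemma rMod_inv_of_pow_lt_abs (hρ : ∀ᶠ ε in 𝓝[>] (0:ℝ), 0 < ρ ε)
    (hρ0 : Tendsto ρ (𝓝[>] 0) (𝓝 0)) {x : ℝ → ℝ} {m : ℕ}
    (hm : ∀ᶠ ε in 𝓝[>] (0:ℝ), ρ ε ^ m < |x ε|) : RMod ρ x⁻¹ := by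
  have hinv : x⁻¹ =O[𝓝[>] (0:ℝ)] fun ε => ρ ε ^ (-(m : ℝ)) := by
    refine IsBigO.of_bound 1 ?_
    filter_upwards [hρ, hm] with ε hpos hlt
    rw [Pi.inv_apply, Real.norm_eq_abs, Real.norm_eq_abs, abs_inv, one_mul,
      abs_of_pos (Real.rpow_pos_of_pos hpos _), Real.rpow_neg hpos.le, Real.rpow_natCast]
    exact inv_anti₀ (pow_pos hpos m) hlt.le
  exact ⟨m + 1, by positivity, hinv.trans (rpow_isBigO_rpow_of_le hρ hρ0 (by linarith))⟩

lemma RInv.exists_rpow_isBigO (hρ : ∀ᶠ ε in 𝓝[>] (0:ℝ), 0 < ρ ε)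
    (hρ0 : Tendsto ρ (𝓝[>] 0) (𝓝 0)) {x : ℝ → ℝ} (hx : RInv ρ x) :
    ∃ b : ℝ, (fun ε => ρ ε ^ b) =O[𝓝[>] (0:ℝ)] x := by
  obtain ⟨y, ⟨b, -, hyb⟩, hxy⟩ := hx
  have hxy1 : Tendsto (fun ε => ‖x ε * y ε‖) (𝓝[>] 0) (𝓝 1) := by
    simpa using ((hxy.tendsto_zero hρ0).add_const 1).norm
  have hone : (fun _ => (1 : ℝ)) =O[𝓝[>] (0:ℝ)] fun ε => x ε * ρ ε ^ (-b) :=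
    ((isBigO_const_left_iff_pos_le_norm one_ne_zero).2
      ⟨1 / 2, one_half_pos, hxy1.eventually_const_le one_half_lt_one⟩).trans
      ((isBigO_refl x _).mul hyb)
  refine ⟨b, ((isBigO_refl (fun ε => ρ ε ^ b) _).mul hone).congr' (by simp) ?_⟩
  filter_upwards [hρ] with ε hpos
  rw [mul_left_comm, ← Real.rpow_add hpos, add_neg_cancel, Real.rpow_zero, mul_one]

end Nets

/-- `x = [x_ε] ∈ ρ-ℝ̃` is invertible iff there exist a representative
`(x'_ε)` of `x` and `m ∈ ℕ` such that `|x'_ε| > ρ_ε^m` for all `ε` small. -/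
theorem invertible_iff_representative_bound (ρ : ℝ → ℝ)
    (hρpos : ∀ ε ∈ Set.Ioc (0:ℝ) 1, 0 < ρ ε)
    (hρ0 : Tendsto ρ (𝓝[>] (0:ℝ)) (𝓝 0))
    (x : ℝ → ℝ) (hx : RMod ρ x) :
    RInv ρ x ↔
      ∃ x' : ℝ → ℝ, RMod ρ x' ∧ RNegl ρ (x - x') ∧
        ∃ m : ℕ, ∀ᶠ ε in 𝓝[>] (0:ℝ), ρ ε ^ m < |x' ε| := by
  have hρ := eventually_pos_nhdsGT_of_pos_on_Ioc hρpos
  constructor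
  · intro hinv
    obtain ⟨b, hb⟩ := hinv.exists_rpow_isBigO hρ hρ0
    exact ⟨x, hx, by simpa using rNegl_zero ρ, exists_pow_lt_abs_of_rpow_isBigO hρ hρ0 hb⟩
  · rintro ⟨x', -, hxx', m, hm⟩
    have hinv := rMod_inv_of_pow_lt_abs hρ hρ0 hm
    refine ⟨x'⁻¹, hinv, fun a ha => ((hxx'.mul_rMod hρ hinv) a ha).congr' ?_ EventuallyEq.rfl⟩
    filter_upwards [hρ, hm] with ε hpos hlt
    have hx'0 : x' ε ≠ 0 := abs_pos.1 ((pow_pos hpos m).trans hlt)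
    simp only [Pi.mul_apply, Pi.sub_apply, Pi.inv_apply, Pi.one_apply]
    field_simp
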